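/- arXiv:1111.0228 — 4 statements merged into one kernel-verified Lean document; each statement's English description precedes it below -/
import Mathlib

section
/- Let C be a Type I binary self-dual code of length n with doubly-even subcode C₀ and shadow S. Then every element of the shadow S has weight congruent to n/2 modulo 4. -/
open Finset

/-- Hamming weight of a binary vector. -/
def wt {n : ℕ} (v : Fin n → ZMod 2) : ℕ := (Finset.univ.filter (fun i => v i ≠ 0)).card

/-- Standard inner product over GF(2). -/
def inn {n : ℕ} (u v : Fin n → ZMod 2) : ZMod 2 := ∑ i, u i * v i

/-- A code is self-dual if it equals its dual. -/
def IsSelfDual {n : ℕ} (C : Submodule (ZMod 2) (Fin n → ZMod 2)) : Prop :=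
  ∀ v, v ∈ C ↔ ∀ c ∈ C, inn v c = 0

/-- `C` has minimum distance (weight) `d`. -/
def HasMinDist {n : ℕ} (C : Submodule (ZMod 2) (Fin n → ZMod 2)) (d : ℕ) : Prop :=
  (∃ c ∈ C, c ≠ 0 ∧ wt c = d) ∧ ∀ c ∈ C, c ≠ 0 → d ≤ wt c

/-- The shadow `S = C₀^⊥ \ C`, where `C₀` is the doubly-even subcode of `C`. -/
def shadow {n : ℕ} (C : Submodule (ZMod 2) (Fin n → ZMod 2)) : Set (Fin n → ZMod 2) :=
  {v | ∀ c ∈ C, wt c % 4 = 0 → inn v c = 0} \ (C : Set (Fin n → ZMod 2))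

/-- Covering radius of a code. -/
noncomputable def coveringRadius {n : ℕ} (C : Submodule (ZMod 2) (Fin n → ZMod 2)) : ℕ :=
  sInf {R | ∀ v : Fin n → ZMod 2, ∃ c ∈ C, wt (v - c) ≤ R}

/-- Prepend two coordinates to a vector. -/
def vcons2 {k : ℕ} (a b : ZMod 2) (v : Fin k → ZMod 2) : Fin (k + 2) → ZMod 2 :=
  Fin.cons a (Fin.cons b v)

/-!
For a self-dual `C`, the shadow consists of the `y ∉ C` with `y · c ≡ wt(c)/2 (mod 2)` for all
`c ∈ C`, and all vectors of `y + C` then have the same weight mod 4. The Fourier transform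
`∑ᵤ i^wt(u) (-1)^(u·c) = (1 + i)ⁿ (-i)^wt(c)`, combined with orthogonality of characters
on `C`, evaluates the Gauss sum `∑_{c ∈ C} i^wt(c + y)` as `(1 + i)^(2m) = 2^m i^m`; the left
side is `|C| i^wt(y)`, so `i^wt(y) = i^m`.
-/

open Complex

section Weight

variable {n : ℕ}

lemma wt_eq_sum_val (v : Fin n → ZMod 2) : wt v = ∑ i, (v i).val := by
  rw [wt, Finset.card_filter]
  refine Finset.sum_congr rfl fun i _ => ?_
  generalize v i = a
  revert a
  decide

lemma natCast_wt (v : Fin n → ZMod 2) : (wt v : ZMod 2) = ∑ i, v i := by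
  rw [wt, Finset.card_filter, Nat.cast_sum]
  refine Finset.sum_congr rfl fun i _ => ?_
  generalize v i = a
  revert a
  decide

lemma natCast_wt_mul (u v : Fin n → ZMod 2) : (wt (u * v) : ZMod 2) = inn u v :=
  natCast_wt (u * v)

lemma natCast_wt_eq_inn_self (v : Fin n → ZMod 2) : (wt v : ZMod 2) = inn v v := by
  have hvv : v * v = v := funext fun i => by simpa [sq] using ZMod.pow_card (v i)
  rw [← natCast_wt_mul, hvv]

lemma wt_add_add_two_mul_wt_mul (u v : Fin n → ZMod 2) :
    wt (u + v) + 2 * wt (u * v) = wt u + wt v := by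
  simp only [wt_eq_sum_val, Finset.mul_sum, ← Finset.sum_add_distrib]
  refine Finset.sum_congr rfl fun i _ => ?_
  simp only [Pi.add_apply, Pi.mul_apply]
  generalize u i = a
  generalize v i = b
  revert a b
  decide

lemma inn_add_left (u v w : Fin n → ZMod 2) : inn (u + v) w = inn u w + inn v w :=
  add_dotProduct u v w

lemma inn_add_right (u v w : Fin n → ZMod 2) : inn u (v + w) = inn u v + inn u w :=
  dotProduct_add u v w

end Weight

/-- `wt v / 2` taken mod 2, with truncating division: only meaningful when `wt v` is even,
as it is on a self-dual code. -/
def halfWt {n : ℕ} (v : Fin n → ZMod 2) : ZMod 2 := (wt v / 2 : ℕ)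

namespace IsSelfDual

variable {n : ℕ} {C : Submodule (ZMod 2) (Fin n → ZMod 2)}

lemma inn_eq_zero (hC : IsSelfDual C) {c c' : Fin n → ZMod 2} (hc : c ∈ C) (hc' : c' ∈ C) :
    inn c c' = 0 :=
  (hC c).1 hc c' hc'

lemma two_dvd_wt (hC : IsSelfDual C) {c : Fin n → ZMod 2} (hc : c ∈ C) : 2 ∣ wt c := by
  rw [← ZMod.natCast_eq_zero_iff, natCast_wt_eq_inn_self, hC.inn_eq_zero hc hc]

lemma wt_add_mod_four (hC : IsSelfDual C) {a b : Fin n → ZMod 2} (ha : a ∈ C) (hb : b ∈ C) :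
    wt (a + b) % 4 = (wt a + wt b) % 4 := by
  have hab := wt_add_add_two_mul_wt_mul a b
  have : 2 ∣ wt (a * b) := by
    rw [← ZMod.natCast_eq_zero_iff, natCast_wt_mul, hC.inn_eq_zero ha hb]
  omega

lemma halfWt_add (hC : IsSelfDual C) {a b : Fin n → ZMod 2} (ha : a ∈ C) (hb : b ∈ C) :
    halfWt (a + b) = halfWt a + halfWt b := by
  have := hC.two_dvd_wt ha
  have := hC.two_dvd_wt hb
  have := hC.wt_add_mod_four ha hb
  rw [halfWt, halfWt, halfWt, ← Nat.cast_add, ZMod.natCast_eq_natCast_iff' _ _ 2]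
  omega

lemma halfWt_eq_zero_iff (hC : IsSelfDual C) {c : Fin n → ZMod 2} (hc : c ∈ C) :
    halfWt c = 0 ↔ wt c % 4 = 0 := by
  have := hC.two_dvd_wt hc
  rw [halfWt, ZMod.natCast_eq_zero_iff]
  omega

lemma inn_eq_halfWt_of_mem_shadow (hC : IsSelfDual C) {y : Fin n → ZMod 2}
    (hy : y ∈ shadow C) {c : Fin n → ZMod 2} (hc : c ∈ C) : inn y c = halfWt c := by
  obtain ⟨hy₀, hyC⟩ := hy
  have hzero {c} (hc : c ∈ C) (h : halfWt c = 0) : inn y c = 0 :=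
    hy₀ c hc ((hC.halfWt_eq_zero_iff hc).1 h)
  have ne_zero_iff : ∀ a : ZMod 2, a ≠ 0 ↔ a = 1 := by decide
  -- A singly-even `c` with `y · c = 0` would make `y` orthogonal to `C = C₀ ∪ (c + C₀)`.
  by_contra hne
  have hc₁ : halfWt c = 1 := (ne_zero_iff _).1 fun h => hne (by rw [hzero hc h, h])
  have hyc : inn y c = 0 := by_contra fun h => hne (by rw [(ne_zero_iff _).1 h, hc₁])
  refine hyC ((hC y).2 fun c' hc' => ?_)
  by_cases h : halfWt c' = 0
  · exact hzero hc' h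
  · have hsum : halfWt (c' + c) = 0 := by
      rw [hC.halfWt_add hc' hc, hc₁, (ne_zero_iff _).1 h]
      decide
    simpa [inn_add_right, hyc] using hzero (C.add_mem hc' hc) hsum

end IsSelfDual

def signChar : AddChar (ZMod 2) ℂ where
  toFun a := (-1) ^ a.val
  map_zero_eq_one' := pow_zero _
  map_add_eq_mul' a b := by rw [ZMod.val_add, ← pow_add, ← neg_one_pow_eq_pow_mod_two]

lemma signChar_apply (a : ZMod 2) : signChar a = (-1) ^ a.val := rfl

lemma signChar_mul_self (a : ZMod 2) : signChar a * signChar a = 1 := by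
  rw [← AddChar.map_add_eq_mul, CharTwo.add_self_eq_zero, AddChar.map_zero_eq_one]

lemma signChar_eq_one_iff {a : ZMod 2} : signChar a = 1 ↔ a = 0 := by
  obtain rfl | rfl : a = 0 ∨ a = 1 := by revert a; decide
  all_goals norm_num [signChar_apply, ZMod.val_one]

lemma signChar_sum {ι : Type*} (s : Finset ι) (f : ι → ZMod 2) :
    signChar (∑ i ∈ s, f i) = ∏ i ∈ s, signChar (f i) := by
  induction s using Finset.cons_induction with
  | empty => simp
  | cons i s hi ih => rw [Finset.sum_cons, Finset.prod_cons, AddChar.map_add_eq_mul, ih]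

lemma sum_zmod_two {M : Type*} [AddCommMonoid M] (f : ZMod 2 → M) : ∑ a, f a = f 0 + f 1 :=
  Fin.sum_univ_two f

lemma sum_I_pow_val_mul_signChar_mul (b : ZMod 2) :
    ∑ a : ZMod 2, I ^ a.val * signChar (a * b) = (1 + I) * (-I) ^ b.val := by
  obtain rfl | rfl : b = 0 ∨ b = 1 := by revert b; decide
  · simp [sum_zmod_two, ZMod.val_one]
  · simp [sum_zmod_two, signChar_apply, ZMod.val_one]
    linear_combination I_sq

lemma sum_I_pow_wt_mul_signChar_inn {n : ℕ} (c : Fin n → ZMod 2) :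
    ∑ u, I ^ wt u * signChar (inn u c) = (1 + I) ^ n * (-I) ^ wt c := by
  calc ∑ u, I ^ wt u * signChar (inn u c)
      = ∑ u : Fin n → ZMod 2, ∏ i, I ^ (u i).val * signChar (u i * c i) := by
        simp only [wt_eq_sum_val, inn, signChar_sum, Finset.prod_mul_distrib,
          Finset.prod_pow_eq_pow_sum]
    _ = ∏ i, ∑ a : ZMod 2, I ^ a.val * signChar (a * c i) :=
        (Fintype.prod_sum fun i (a : ZMod 2) => I ^ a.val * signChar (a * c i)).symm
    _ = (1 + I) ^ n * (-I) ^ wt c := by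
        simp only [sum_I_pow_val_mul_signChar_mul, Finset.prod_mul_distrib, Finset.prod_const,
          Finset.card_univ, Fintype.card_fin, Finset.prod_pow_eq_pow_sum, wt_eq_sum_val]

def innChar {n : ℕ} (C : Submodule (ZMod 2) (Fin n → ZMod 2)) (u : Fin n → ZMod 2) :
    AddChar C ℂ where
  toFun c := signChar (inn u c)
  map_zero_eq_one' := by simp [inn]
  map_add_eq_mul' a b := by rw [Submodule.coe_add, inn_add_right, AddChar.map_add_eq_mul]

lemma sum_signChar_inn {n : ℕ} (C : Submodule (ZMod 2) (Fin n → ZMod 2)) [Fintype C]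
    (u : Fin n → ZMod 2) [Decidable (∀ c ∈ C, inn u c = 0)] :
    ∑ c : C, signChar (inn u c) =
      if ∀ c ∈ C, inn u c = 0 then (Fintype.card C : ℂ) else 0 := by
  classical
  convert (innChar C u).sum_eq_ite using 2
  · rfl
  · rw [AddChar.eq_zero_iff]
    simp [innChar, signChar_eq_one_iff]

lemma neg_I_pow_wt_eq_signChar_halfWt {n : ℕ} {c : Fin n → ZMod 2} (hc : 2 ∣ wt c) :
    (-I) ^ wt c = signChar (halfWt c) := by
  obtain ⟨k, hk⟩ := hc
  rw [halfWt, hk, Nat.mul_div_cancel_left k two_pos, pow_mul, neg_sq, I_sq, signChar_apply,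
    ZMod.val_natCast, ← neg_one_pow_eq_pow_mod_two]

namespace IsSelfDual

variable {n : ℕ} {C : Submodule (ZMod 2) (Fin n → ZMod 2)}

lemma wt_add_mod_four_of_inn_eq_halfWt (hC : IsSelfDual C) {y : Fin n → ZMod 2}
    (hy : ∀ c ∈ C, inn y c = halfWt c) {c : Fin n → ZMod 2} (hc : c ∈ C) :
    wt (c + y) % 4 = wt y % 4 := by
  have hsum := wt_add_add_two_mul_wt_mul y c
  have heven := hC.two_dvd_wt hc
  have hoverlap : wt (y * c) % 2 = wt c / 2 % 2 := by
    rw [← ZMod.natCast_eq_natCast_iff', natCast_wt_mul, hy c hc, halfWt]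
  rw [add_comm]
  omega

lemma sum_I_pow_wt_add_of_inn_eq_halfWt (hC : IsSelfDual C) [Fintype C] {y : Fin n → ZMod 2}
    (hy : ∀ c ∈ C, inn y c = halfWt c) :
    ∑ c : C, I ^ wt ((c : Fin n → ZMod 2) + y) = (1 + I) ^ n := by
  classical
  refine mul_left_cancel₀ (Nat.cast_ne_zero.2 (Fintype.card_ne_zero (α := C))) ?_
  calc (Fintype.card C : ℂ) * ∑ c : C, I ^ wt ((c : Fin n → ZMod 2) + y)
      = ∑ u, I ^ wt (u + y) * ∑ c : C, signChar (inn u c) := by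
        have hmem (u : Fin n → ZMod 2) : (∀ c ∈ C, inn u c = 0) ↔ u ∈ C := (hC u).symm
        simp_rw [sum_signChar_inn, hmem, mul_ite, mul_zero, ← Finset.sum_filter]
        rw [Finset.sum_subtype (F := ‹_›) (univ.filter (· ∈ C)) (by simp), Finset.mul_sum]
        simp_rw [mul_comm]
    _ = ∑ c : C, ∑ u,
          I ^ wt u * signChar (inn u (c : Fin n → ZMod 2)) * signChar (inn y c) := by
        simp_rw [Finset.mul_sum]
        rw [Finset.sum_comm]
        refine Finset.sum_congr rfl fun c _ =>
          Fintype.sum_equiv (Equiv.addRight y) _ _ fun u => ?_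
        rw [Equiv.coe_addRight, inn_add_left, AddChar.map_add_eq_mul, mul_assoc, mul_assoc,
          signChar_mul_self, mul_one]
    _ = ∑ _c : C, (1 + I) ^ n := by
        refine Finset.sum_congr rfl fun c _ => ?_
        rw [← Finset.sum_mul, sum_I_pow_wt_mul_signChar_inn, hy c c.2,
          neg_I_pow_wt_eq_signChar_halfWt (hC.two_dvd_wt c.2), mul_assoc, signChar_mul_self,
          mul_one]
    _ = (Fintype.card C : ℂ) * (1 + I) ^ n := by simp

end IsSelfDual

lemma I_pow_eq_I_pow_iff {a b : ℕ} : I ^ a = I ^ b ↔ a % 4 = b % 4 := by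
  rw [(isPrimitiveRoot_I.isOfFinOrder four_ne_zero).pow_inj_mod, ← isPrimitiveRoot_I.eq_orderOf]

lemma IsSelfDual.wt_mod_four_eq_of_inn_eq_halfWt {m : ℕ}
    {C : Submodule (ZMod 2) (Fin (2 * m) → ZMod 2)} (hC : IsSelfDual C)
    {y : Fin (2 * m) → ZMod 2}
    (hy : ∀ c ∈ C, inn y c = halfWt c) : wt y % 4 = m % 4 := by
  classical
  have hconst (c : C) : I ^ wt ((c : Fin (2 * m) → ZMod 2) + y) = I ^ wt y :=
    I_pow_eq_I_pow_iff.2 (hC.wt_add_mod_four_of_inn_eq_halfWt hy c.2)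
  have hsum : (Fintype.card C : ℂ) * I ^ wt y = 2 ^ m * I ^ m := by
    have h := hC.sum_I_pow_wt_add_of_inn_eq_halfWt hy
    rwa [Finset.sum_congr rfl fun c _ => hconst c, Finset.sum_const, nsmul_eq_mul,
      Finset.card_univ, pow_mul, show (1 + I) ^ 2 = 2 * I by linear_combination I_sq,
      mul_pow] at h
  have hcard : (Fintype.card C : ℂ) = 2 ^ m := by
    exact_mod_cast (by simpa using congrArg norm hsum : (Fintype.card C : ℝ) = 2 ^ m)
  rw [hcard] at hsum
  exact I_pow_eq_I_pow_iff.1 (mul_left_cancel₀ (pow_ne_zero m two_ne_zero) hsum)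

theorem stmt_4_general (m : ℕ)
    (C : Submodule (ZMod 2) (Fin (2*m) → ZMod 2))
    (hsd : IsSelfDual C) :
    ∀ y ∈ shadow C, wt y % 4 = m % 4 := by
  intro y hy
  exact hsd.wt_mod_four_eq_of_inn_eq_halfWt fun c hc => hsd.inn_eq_halfWt_of_mem_shadow hy hc

theorem stmt_4 (m : ℕ)
    (C : Submodule (ZMod 2) (Fin (2*m) → ZMod 2))
    (hsd : IsSelfDual C) (hT : ∃ c ∈ C, wt c % 4 = 2) :
    ∀ y ∈ shadow C, wt y % 4 = m % 4 :=
  stmt_4_general m C hsd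
end

section
/- Let C₀ be a binary self-dual code of length n with generator matrix G₀ whose rows are r₁, …, r_{n/2}, and let x ∈ GF(2)^n have odd Hamming weight. Define yᵢ = x·rᵢ for each i. Then the code of length n+2 generated by the vector (1, 0, x) together with the vectors (yᵢ, yᵢ, rᵢ) for 1 ≤ i ≤ n/2 is self-dual of dimension n/2 + 1. -/
/-!
The vector `v₀ = (1, 0, x)` is isotropic because `x` has odd weight, it is orthogonal to every
`(x·u, x·u, u)` because the two new coordinates contribute `x·u` twice, and in characteristic 2 the
map `u ↦ (x·u, x·u, u)` preserves the dot product; so the new code is self-orthogonal. Conversely,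
if `(a, b, w)` is orthogonal to it then `x·w = a`, hence `w + (a + b) x` is orthogonal to `C₀`,
so lies in `C₀`, and `(a, b, w) = (a + b) v₀ + (x·w', x·w', w')` for `w' = w + (a + b) x`.
Since the dot product is nondegenerate, a self-dual code of length `n + 2` has dimension `n/2 + 1`.
-/

open Finset

open Matrix Module

lemma inn_eq_dotProduct {n : ℕ} (u v : Fin n → ZMod 2) : inn u v = u ⬝ᵥ v := rfl

lemma isSelfDual_iff_dotProduct {n : ℕ} (C : Submodule (ZMod 2) (Fin n → ZMod 2)) :
    IsSelfDual C ↔ ∀ v, v ∈ C ↔ ∀ c ∈ C, v ⬝ᵥ c = 0 := Iff.rfl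

lemma inn_self_eq_wt {n : ℕ} (v : Fin n → ZMod 2) : inn v v = wt v := by
  have hsq : ∀ a : ZMod 2, a * a = if a ≠ 0 then 1 else 0 := by decide
  simp only [inn, wt, hsq, Finset.sum_ite, Finset.sum_const_zero, add_zero, Finset.sum_const,
    nsmul_eq_mul, mul_one]

lemma dotProductBilin_nondegenerate {K ι : Type*} [Field K] [Fintype ι] :
    (dotProductBilin K K : LinearMap.BilinForm K (ι → K)).Nondegenerate :=
  ⟨fun _ hv => dotProduct_eq_zero _ hv,
    fun _ hw => dotProduct_eq_zero _ fun v => dotProduct_comm _ v ▸ hw v⟩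

lemma IsSelfDual.two_mul_finrank {n : ℕ} {C : Submodule (ZMod 2) (Fin n → ZMod 2)}
    (hC : IsSelfDual C) : 2 * finrank (ZMod 2) C = n := by
  have horth : LinearMap.BilinForm.orthogonal (dotProductBilin (ZMod 2) (ZMod 2)) C = C := by
    ext v
    simp only [LinearMap.BilinForm.mem_orthogonal_iff, dotProductBilin_apply_apply,
      (isSelfDual_iff_dotProduct C).1 hC v, dotProduct_comm v]
  have h := LinearMap.BilinForm.finrank_orthogonal dotProductBilin_nondegenerate C
  rw [horth, finrank_fin_fun] at h
  have := Submodule.finrank_le C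
  rw [finrank_fin_fun] at this
  omega

section BuildUp

variable {k : ℕ}

lemma vcons2_add (a b a' b' : ZMod 2) (u u' : Fin k → ZMod 2) :
    vcons2 a b u + vcons2 a' b' u' = vcons2 (a + a') (b + b') (u + u') :=
  (cons_add_cons a _ a' _).trans (congrArg _ (cons_add_cons b u b' u'))

lemma smul_vcons2 (c a b : ZMod 2) (u : Fin k → ZMod 2) :
    c • vcons2 a b u = vcons2 (c * a) (c * b) (c • u) :=
  (smul_cons c a _).trans (congrArg _ (smul_cons c b u))

lemma vcons2_dotProduct_vcons2 (a b a' b' : ZMod 2) (u u' : Fin k → ZMod 2) :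
    vcons2 a b u ⬝ᵥ vcons2 a' b' u' = a * a' + b * b' + u ⬝ᵥ u' := by
  change vecCons a (vecCons b u) ⬝ᵥ vecCons a' (vecCons b' u') = _
  rw [cons_dotProduct_cons, cons_dotProduct_cons, add_assoc]

lemma exists_eq_vcons2 (v : Fin (k + 2) → ZMod 2) : ∃ a b u, v = vcons2 a b u :=
  ⟨v 0, Fin.tail v 0, Fin.tail (Fin.tail v), by rw [vcons2, Fin.cons_self_tail, Fin.cons_self_tail]⟩

def buildUpMap (x : Fin k → ZMod 2) : (Fin k → ZMod 2) →ₗ[ZMod 2] (Fin (k + 2) → ZMod 2) where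
  toFun u := vcons2 (x ⬝ᵥ u) (x ⬝ᵥ u) u
  map_add' u u' := by rw [vcons2_add, dotProduct_add]
  map_smul' c u := by rw [smul_vcons2, dotProduct_smul, smul_eq_mul]; rfl

lemma buildUpMap_apply (x u : Fin k → ZMod 2) :
    buildUpMap x u = vcons2 (x ⬝ᵥ u) (x ⬝ᵥ u) u := rfl

lemma buildUpMap_dotProduct_buildUpMap (x u u' : Fin k → ZMod 2) :
    buildUpMap x u ⬝ᵥ buildUpMap x u' = u ⬝ᵥ u' := by
  rw [buildUpMap_apply, buildUpMap_apply, vcons2_dotProduct_vcons2, CharTwo.add_self_eq_zero,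
    zero_add]

lemma vcons2_one_zero_dotProduct_buildUpMap (x u : Fin k → ZMod 2) :
    vcons2 1 0 x ⬝ᵥ buildUpMap x u = 0 := by
  rw [buildUpMap_apply, vcons2_dotProduct_vcons2, one_mul, zero_mul, add_zero,
    CharTwo.add_self_eq_zero]

lemma dotProduct_self_of_wt_odd {x : Fin k → ZMod 2} (hx : wt x % 2 = 1) : x ⬝ᵥ x = 1 := by
  rw [← inn_eq_dotProduct, inn_self_eq_wt, ← ZMod.natCast_mod, hx, Nat.cast_one]

lemma vcons2_one_zero_dotProduct_self {x : Fin k → ZMod 2} (hx : wt x % 2 = 1) :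
    vcons2 1 0 x ⬝ᵥ vcons2 1 0 x = 0 := by
  rw [vcons2_dotProduct_vcons2, dotProduct_self_of_wt_odd hx]
  decide

lemma vcons2_eq_smul_add_buildUpMap {x w : Fin k → ZMod 2} {a b : ZMod 2} (hx : x ⬝ᵥ x = 1)
    (ha : x ⬝ᵥ w = a) :
    vcons2 a b w = (a + b) • vcons2 1 0 x + buildUpMap x (w + (a + b) • x) := by
  rw [buildUpMap_apply, smul_vcons2, vcons2_add, dotProduct_add, dotProduct_smul, hx, ha,
    smul_eq_mul]
  congr 1
  · grind
  · grind
  · rw [add_left_comm, ← add_smul, CharTwo.add_self_eq_zero, zero_smul, add_zero]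

def buildUp (C0 : Submodule (ZMod 2) (Fin k → ZMod 2)) (x : Fin k → ZMod 2) :
    Submodule (ZMod 2) (Fin (k + 2) → ZMod 2) :=
  (ZMod 2 ∙ vcons2 1 0 x) ⊔ C0.map (buildUpMap x)

lemma span_insert_range_eq_buildUp {ι : Type*} (r : ι → Fin k → ZMod 2) (x : Fin k → ZMod 2) :
    Submodule.span (ZMod 2)
        (insert (vcons2 1 0 x) (Set.range fun i => vcons2 (inn x (r i)) (inn x (r i)) (r i))) =
      buildUp (Submodule.span (ZMod 2) (Set.range r)) x := by
  rw [Submodule.span_insert, buildUp, Submodule.map_span, ← Set.range_comp]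
  rfl

lemma forall_dotProduct_buildUp_eq_zero_iff (C0 : Submodule (ZMod 2) (Fin k → ZMod 2))
    (x : Fin k → ZMod 2) (v : Fin (k + 2) → ZMod 2) :
    (∀ c ∈ buildUp C0 x, v ⬝ᵥ c = 0) ↔
      v ⬝ᵥ vcons2 1 0 x = 0 ∧ ∀ u ∈ C0, v ⬝ᵥ buildUpMap x u = 0 := by
  change buildUp C0 x ≤ LinearMap.ker (dotProductBilin (ZMod 2) (ZMod 2) v) ↔ _
  rw [buildUp, sup_le_iff, Submodule.span_singleton_le_iff_mem, Submodule.map_le_iff_le_comap]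
  rfl

theorem isSelfDual_buildUp {C0 : Submodule (ZMod 2) (Fin k → ZMod 2)} (hC0 : IsSelfDual C0)
    {x : Fin k → ZMod 2} (hx : wt x % 2 = 1) : IsSelfDual (buildUp C0 x) := by
  rw [isSelfDual_iff_dotProduct] at hC0 ⊢
  intro v
  rw [forall_dotProduct_buildUp_eq_zero_iff]
  constructor
  · intro hv
    obtain ⟨_, hy, _, ⟨u, hu, rfl⟩, rfl⟩ := Submodule.mem_sup.mp hv
    obtain ⟨t, rfl⟩ := Submodule.mem_span_singleton.mp hy
    refine ⟨?_, fun u' hu' => ?_⟩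
    · rw [add_dotProduct, smul_dotProduct, vcons2_one_zero_dotProduct_self hx, dotProduct_comm,
        vcons2_one_zero_dotProduct_buildUpMap, smul_zero, add_zero]
    · rw [add_dotProduct, smul_dotProduct, vcons2_one_zero_dotProduct_buildUpMap,
        buildUpMap_dotProduct_buildUpMap, (hC0 u).1 hu u' hu', smul_zero, add_zero]
  · rintro ⟨h0, hC⟩
    obtain ⟨a, b, w, rfl⟩ := exists_eq_vcons2 v
    have ha : x ⬝ᵥ w = a := by
      rw [vcons2_dotProduct_vcons2, mul_one, mul_zero, add_zero, dotProduct_comm] at h0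
      grind
    have hw : w + (a + b) • x ∈ C0 := by
      refine (hC0 _).2 fun u hu => ?_
      rw [← hC u hu, buildUpMap_apply, vcons2_dotProduct_vcons2, add_dotProduct,
        smul_dotProduct, smul_eq_mul]
      ring
    rw [vcons2_eq_smul_add_buildUpMap (dotProduct_self_of_wt_odd hx) ha]
    exact add_mem
      (Submodule.smul_mem _ _ (Submodule.mem_sup_left (Submodule.mem_span_singleton_self _)))
      (Submodule.mem_sup_right (Submodule.mem_map_of_mem hw))

end BuildUp

theorem stmt_5 (m : ℕ)
    (C0 : Submodule (ZMod 2) (Fin (2*m) → ZMod 2)) (hC0 : IsSelfDual C0)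
    (r : Fin m → Fin (2*m) → ZMod 2)
    (hr : Submodule.span (ZMod 2) (Set.range r) = C0)
    (x : Fin (2*m) → ZMod 2) (hx : wt x % 2 = 1) :
    IsSelfDual (Submodule.span (ZMod 2)
      (insert (vcons2 1 0 x)
        (Set.range fun i => vcons2 (inn x (r i)) (inn x (r i)) (r i)))) ∧
    Module.finrank (ZMod 2)
      ↥(Submodule.span (ZMod 2)
        (insert (vcons2 1 0 x)
          (Set.range fun i => vcons2 (inn x (r i)) (inn x (r i)) (r i)))) = m + 1 := by
  rw [span_insert_range_eq_buildUp, hr]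
  have hC := isSelfDual_buildUp hC0 hx
  have hdim := hC.two_mul_finrank
  exact ⟨hC, by omega⟩
end

section
/- Let C₁ be a binary self-dual code of length n with covering radius ρ(C₁) = r, and let C₂ be a self-dual code of length n+2 obtained from C₁ by the building-up construction (generated by (1,0,x) and (yᵢ, yᵢ, rᵢ) for rows rᵢ of a generator matrix of C₁, with yᵢ = x·rᵢ and x of odd weight). Then ρ(C₂) ≤ r + 2. -/
open Finset

lemma wt_eq_sum {n : ℕ} (v : Fin n → ZMod 2) : wt v = ∑ i, if v i = 0 then 0 else 1 := by
  rw [wt, Finset.card_filter]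
  exact Finset.sum_congr rfl fun i _ => by split_ifs <;> simp_all

lemma wt_cons {n : ℕ} (a : ZMod 2) (v : Fin n → ZMod 2) :
    wt (Fin.cons a v) = (if a = 0 then 0 else 1) + wt v := by
  simp [wt_eq_sum, Fin.sum_univ_succ]

lemma wt_le_two_add {n : ℕ} (u : Fin (n+2) → ZMod 2) :
    wt u ≤ 2 + wt (fun i => u i.succ.succ) := by
  have h : Fin.tail (Fin.tail u) = fun i => u i.succ.succ := rfl
  calc wt u = wt (Fin.cons (u 0) (Fin.cons (Fin.tail u 0) (Fin.tail (Fin.tail u)))) := by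
        rw [Fin.cons_self_tail, Fin.cons_self_tail]
    _ = (if u 0 = 0 then 0 else 1) + ((if Fin.tail u 0 = 0 then 0 else 1)
          + wt (Fin.tail (Fin.tail u))) := by rw [wt_cons, wt_cons]
    _ ≤ 2 + wt (fun i => u i.succ.succ) := by rw [h]; split_ifs <;> omega

def buildT {n : ℕ} (x : Fin n → ZMod 2) : (Fin n → ZMod 2) →ₗ[ZMod 2] (Fin (n+2) → ZMod 2) where
  toFun c := vcons2 (inn x c) (inn x c) c
  map_add' c d := by
    have hi : inn x (c + d) = inn x c + inn x d := by
      simp [inn, mul_add, Finset.sum_add_distrib]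
    funext i
    refine Fin.cases ?_ (fun j => ?_) i
    · simp [vcons2, hi]
    · refine Fin.cases ?_ (fun j2 => ?_) j
      · simp [vcons2, hi]
      · simp [vcons2]
  map_smul' a c := by
    have hi : inn x (a • c) = a * inn x c := by
      simp only [inn, Pi.smul_apply, smul_eq_mul, Finset.mul_sum]
      exact Finset.sum_congr rfl fun i _ => by ring
    funext i
    refine Fin.cases ?_ (fun j => ?_) i
    · simp [vcons2, hi]
    · refine Fin.cases ?_ (fun j2 => ?_) j
      · simp [vcons2, hi]
      · simp [vcons2]
theorem stmt_12' (m : ℕ)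
    (C1 : Submodule (ZMod 2) (Fin (2*m) → ZMod 2))
    (r : Fin m → Fin (2*m) → ZMod 2) (hr : Submodule.span (ZMod 2) (Set.range r) = C1)
    (x : Fin (2*m) → ZMod 2)
    (C2 : Submodule (ZMod 2) (Fin (2*m+2) → ZMod 2))
    (hC2 : C2 = Submodule.span (ZMod 2)
      (insert (vcons2 1 0 x)
        (Set.range fun i => vcons2 (inn x (r i)) (inn x (r i)) (r i)))) :
    coveringRadius C2 ≤ coveringRadius C1 + 2 := by
  -- the set defining coveringRadius C1 is nonempty, so its sInf is a member
  have hmem : (2*m) ∈ {R | ∀ v : Fin (2*m) → ZMod 2, ∃ c ∈ C1, wt (v - c) ≤ R} := by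
    intro v
    exact ⟨0, C1.zero_mem, by
      simpa [wt] using (Finset.card_filter_le Finset.univ _).trans (by simp)⟩
  have hcov : ∀ v : Fin (2*m) → ZMod 2, ∃ c ∈ C1, wt (v - c) ≤ coveringRadius C1 :=
    Nat.sInf_mem ⟨2*m, hmem⟩
  -- the map T
  have hT : ∀ c ∈ C1, buildT x c ∈ C2 := by
    intro c hc
    have h1 : Submodule.map (buildT x) C1 ≤ C2 := by
      rw [← hr, Submodule.map_span, Submodule.span_le, hC2]
      rintro _ ⟨_, ⟨i, rfl⟩, rfl⟩
      exact Submodule.subset_span (Set.mem_insert_of_mem _ ⟨i, rfl⟩)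
    exact h1 ⟨c, hc, rfl⟩
  apply Nat.sInf_le
  intro v
  obtain ⟨c, hc, hwc⟩ := hcov (fun i => v i.succ.succ)
  refine ⟨buildT x c, hT c hc, ?_⟩
  have htail : (fun i : Fin (2*m) => (v - buildT x c) i.succ.succ)
      = (fun i => v i.succ.succ) - c := by
    funext i
    simp [buildT, vcons2, Fin.cons_succ]
  calc wt (v - buildT x c) ≤ 2 + wt (fun i => (v - buildT x c) i.succ.succ) :=
        wt_le_two_add _
    _ = 2 + wt ((fun i => v i.succ.succ) - c) := by rw [htail]
    _ ≤ 2 + coveringRadius C1 := by omega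
    _ = coveringRadius C1 + 2 := by omega

theorem stmt_12 (m : ℕ)
    (C1 : Submodule (ZMod 2) (Fin (2*m) → ZMod 2)) (hC1 : IsSelfDual C1)
    (r : Fin m → Fin (2*m) → ZMod 2) (hr : Submodule.span (ZMod 2) (Set.range r) = C1)
    (x : Fin (2*m) → ZMod 2) (hx : wt x % 2 = 1)
    (C2 : Submodule (ZMod 2) (Fin (2*m+2) → ZMod 2))
    (hC2 : C2 = Submodule.span (ZMod 2)
      (insert (vcons2 1 0 x)
        (Set.range fun i => vcons2 (inn x (r i)) (inn x (r i)) (r i))))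
    (hC2sd : IsSelfDual C2) :
    coveringRadius C2 ≤ coveringRadius C1 + 2 :=
  stmt_12' m C1 r hr x C2 hC2
end

section
/- Every code produced by the recursive construction is, up to permutation of the first two coordinates, also produced by the building-up construction: if D is a binary self-dual code of length n+2 with minimum distance > 2 containing the code C generated by vectors (1,1,g) for g ranging over generators g of weight d of a self-dual code of length n, together with vectors (a,a,e), then there exists an odd-weight vector x ∈ GF(2)^n and a coset representative z₂ of C in C^⊥ such that, after possibly swapping the first two coordinates, z₂ = (1,0,x) and x·g = 1 for each generator g above. -/
open Finset

lemma zmod2_ne : ∀ a b : ZMod 2, a ≠ b → (a = 1 ∧ b = 0) ∨ (a = 0 ∧ b = 1) := by decide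

lemma inn_vcons2 {k} (a b c d' : ZMod 2) (x y : Fin k → ZMod 2) :
    inn (vcons2 a b x) (vcons2 c d' y) = a*c + (b*d' + inn x y) := by
  unfold inn vcons2
  rw [Fin.sum_univ_succ, Fin.sum_univ_succ]
  simp [Fin.cons_zero, Fin.cons_succ]

lemma sum_eq_wt {n} (v : Fin n → ZMod 2) : ∑ i, v i = (wt v : ZMod 2) := by
  unfold wt
  rw [← Finset.sum_filter_ne_zero]
  have h1 : ∀ i ∈ Finset.univ.filter (fun i => v i ≠ 0), v i = 1 := by
    intro i hi
    have := (Finset.mem_filter.mp hi).2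
    revert this
    generalize v i = a
    revert a; decide
  rw [Finset.sum_congr rfl h1, Finset.sum_const, nsmul_eq_mul, mul_one]

lemma inn_self {n} (v : Fin n → ZMod 2) : inn v v = (wt v : ZMod 2) := by
  unfold inn
  have : ∀ a : ZMod 2, a * a = a := by decide
  simp only [this]
  exact sum_eq_wt v

lemma vcons2_decomp {k} (z : Fin (k+2) → ZMod 2) :
    z = vcons2 (z 0) (z 1) (fun i => z i.succ.succ) := by
  funext i
  unfold vcons2
  refine Fin.cases rfl (fun j => ?_) i
  refine Fin.cases ?_ (fun l => ?_) j <;> simp [Fin.cons_succ]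
theorem stmt_13 (m d : ℕ)
    (G : Set (Fin (2*m) → ZMod 2)) (hG : ∀ g ∈ G, wt g = d)
    (C : Submodule (ZMod 2) (Fin (2*m+2) → ZMod 2))
    (hCfirst : ∀ c ∈ C, ∃ a : ZMod 2, ∃ e : Fin (2*m) → ZMod 2, c = vcons2 a a e)
    (hCG : ∀ g ∈ G, vcons2 1 1 g ∈ C)
    (hCdim : Module.finrank (ZMod 2) ↥C = m)
    (D : Submodule (ZMod 2) (Fin (2*m+2) → ZMod 2))
    (hCD : C ≤ D) (hDsd : IsSelfDual D)
    (hDmin : ∀ c ∈ D, c ≠ 0 → 3 ≤ wt c) :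
    ∃ x : Fin (2*m) → ZMod 2, wt x % 2 = 1 ∧
      (vcons2 1 0 x ∈ (D : Set (Fin (2*m+2) → ZMod 2)) \ (C : Set (Fin (2*m+2) → ZMod 2)) ∨
       vcons2 0 1 x ∈ (D : Set (Fin (2*m+2) → ZMod 2)) \ (C : Set (Fin (2*m+2) → ZMod 2))) ∧
      ∀ g ∈ G, inn x g = 1 := by
  by_cases h : ∃ z ∈ D, z 0 ≠ z 1
  · obtain ⟨z, hzD, hz01⟩ := h
    set x : Fin (2*m) → ZMod 2 := fun i => z i.succ.succ with hx
    have hzdec : z = vcons2 (z 0) (z 1) x := vcons2_decomp z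
    -- z not in C
    have hzC : z ∉ C := by
      intro hzC
      obtain ⟨a, e, he⟩ := hCfirst z hzC
      apply hz01
      rw [he]
      simp [vcons2, Fin.cons_zero]
    -- weight of x is odd
    have hself : inn z z = 0 := (hDsd z).mp hzD z hzD
    have hwx : (wt x : ZMod 2) = 1 := by
      rw [hzdec, inn_vcons2, inn_self] at hself
      revert hself hz01
      generalize z 0 = a; generalize z 1 = b; generalize (wt x : ZMod 2) = c
      revert a b c; decide
    have hw2 : wt x % 2 = 1 := by
      rcases Nat.mod_two_eq_zero_or_one (wt x) with h2 | h2
      · exfalso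
        rw [← ZMod.natCast_mod (wt x) 2, h2] at hwx
        simp at hwx
      · exact h2
    -- inner products with generators
    have hing : ∀ g ∈ G, inn x g = 1 := by
      intro g hg
      have hgD : vcons2 1 1 g ∈ D := hCD (hCG g hg)
      have h0 : inn z (vcons2 1 1 g) = 0 := (hDsd z).mp hzD _ hgD
      rw [hzdec, inn_vcons2] at h0
      revert h0 hz01
      generalize z 0 = a; generalize z 1 = b; generalize inn x g = c
      revert a b c; decide
    refine ⟨x, hw2, ?_, hing⟩
    rcases zmod2_ne _ _ hz01 with ⟨h0, h1⟩ | ⟨h0, h1⟩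
    · left; rw [h0, h1] at hzdec; rw [← hzdec]; exact ⟨hzD, hzC⟩
    · right; rw [h0, h1] at hzdec; rw [← hzdec]; exact ⟨hzD, hzC⟩
  · exfalso
    push_neg at h
    set w : Fin (2*m+2) → ZMod 2 := vcons2 1 1 0 with hw
    have hwD : w ∈ D := by
      rw [hDsd]
      intro c hc
      have hc01 : c 0 = c 1 := h c hc
      have : inn w c = c 0 + c 1 := by
        rw [hw, vcons2_decomp c, inn_vcons2]
        simp [vcons2, inn, Fin.cons_zero]
      rw [this, hc01, CharTwo.add_self_eq_zero]
    have hwne : w ≠ 0 := by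
      intro h0
      have : w 0 = 0 := by rw [h0]; rfl
      rw [hw] at this
      simp [vcons2] at this
    have h3 : 3 ≤ wt w := hDmin w hwD hwne
    have hle : wt w ≤ 2 := by
      unfold wt
      have hsub : Finset.univ.filter (fun i => w i ≠ 0) ⊆ {0, 1} := by
        intro i hi
        have hiv := (Finset.mem_filter.mp hi).2
        revert hiv
        refine Fin.cases ?_ (fun j => ?_) i
        · intro _; simp
        · refine Fin.cases ?_ (fun l => ?_) j
          · intro _
            simp only [Finset.mem_insert, Finset.mem_singleton]
            right
            ext
            simp [Fin.val_one]
          · intro hiv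
            exact absurd (by simp [hw, vcons2, Fin.cons_succ]) hiv
      calc (Finset.univ.filter (fun i => w i ≠ 0)).card ≤ ({0, 1} : Finset (Fin (2*m+2))).card :=
            Finset.card_le_card hsub
        _ ≤ 2 := by
            apply le_trans (Finset.card_insert_le _ _)
            simp
    omega
end
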